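/- Let A be a φ-algebra with multiplicative identity e. Let Ψ : A × A → A be a symmetric bilinear separately band preserving map such that a(bΨ(c,d) + cΨ(b,d) + dΨ(b,c)) = b(aΨ(c,d) + cΨ(a,d) + dΨ(a,c)) for all a,b,c,d ∈ A. Then Ψ(a,b) = ab·Ψ(e,e) for all a,b ∈ A. -/
import Mathlib


/-- A linear operator `T` is band preserving if `|x| ⊓ |y| = 0` implies `|T x| ⊓ |y| = 0`. -/
def IsBandPreserving {A : Type*} [CommRing A] [Lattice A] [Algebra ℝ A]
    (T : A →ₗ[ℝ] A) : Prop :=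
  ∀ x y : A, |x| ⊓ |y| = 0 → |T x| ⊓ |y| = 0

/-- `T` is order bounded if it maps order bounded sets to order bounded sets. -/
def IsOrderBounded {A : Type*} [CommRing A] [Lattice A] [Algebra ℝ A]
    (T : A →ₗ[ℝ] A) : Prop :=
  ∀ s : Set A, (∃ a b : A, s ⊆ Set.Icc a b) → ∃ l u : A, T '' s ⊆ Set.Icc l u

/-- An orthomorphism is an order bounded band preserving operator. -/
def IsOrthomorphism {A : Type*} [CommRing A] [Lattice A] [Algebra ℝ A]
    (T : A →ₗ[ℝ] A) : Prop :=
  IsBandPreserving T ∧ IsOrderBounded T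

/-- A bilinear map is separately band preserving if all its partial maps are band
preserving. -/
def SepBandPreserving {A : Type*} [CommRing A] [Lattice A] [Algebra ℝ A]
    (Ψ : A →ₗ[ℝ] A →ₗ[ℝ] A) : Prop :=
  ∀ a : A, (∀ x y : A, |x| ⊓ |y| = 0 → |Ψ a x| ⊓ |y| = 0) ∧
    (∀ x y : A, |x| ⊓ |y| = 0 → |Ψ x a| ⊓ |y| = 0)

/-- Let `A` be a φ-algebra (an Archimedean `f`-algebra with multiplicative
identity `e = 1`). Let `Ψ : A × A → A` be a symmetric bilinear separately band preserving map
such that `a(bΨ(c,d) + cΨ(b,d) + dΨ(b,c)) = b(aΨ(c,d) + cΨ(a,d) + dΨ(a,c))` for all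
`a,b,c,d ∈ A`. Then `Ψ(a,b) = ab·Ψ(e,e)` for all `a,b ∈ A`. -/
theorem sep_band_preserving_symm_bilinear_eq (A : Type*) [CommRing A] [Lattice A] [Algebra ℝ A]
    (hadd : ∀ a b c : A, a ≤ b → a + c ≤ b + c)
    (hsmulpos : ∀ (r : ℝ) (a : A), 0 ≤ r → 0 ≤ a → 0 ≤ r • a)
    (hmulpos : ∀ a b : A, 0 ≤ a → 0 ≤ b → 0 ≤ a * b)
    (hfalg : ∀ a b c : A, a ⊓ b = 0 → 0 ≤ c → (c * a) ⊓ b = 0)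
    (harch : ∀ a b : A, 0 ≤ a → 0 ≤ b → (∀ n : ℕ, n • a ≤ b) → a = 0)
    (Ψ : A →ₗ[ℝ] A →ₗ[ℝ] A)
    (hsymm : ∀ a b : A, Ψ a b = Ψ b a)
    (hbp : SepBandPreserving Ψ)
    (heq : ∀ a b c d : A,
      a * (b * Ψ c d + c * Ψ b d + d * Ψ b c) = b * (a * Ψ c d + c * Ψ a d + d * Ψ a c)) :
    ∀ a b : A, Ψ a b = a * b * Ψ 1 1 := by
  have half : ∀ x y : A, x + x = y + y → x = y := by
    intro x y h
    have h2 : (2:ℝ) • x = (2:ℝ) • y := by rw [two_smul, two_smul]; exact h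
    calc x = (2⁻¹:ℝ) • ((2:ℝ) • x) := by rw [smul_smul]; norm_num
    _ = (2⁻¹:ℝ) • ((2:ℝ) • y) := by rw [h2]
    _ = y := by rw [smul_smul]; norm_num
  have hone : ∀ a : A, Ψ a 1 = a * Ψ 1 1 := by
    intro a
    have h1 := heq a 1 1 1
    apply half
    linear_combination -h1
  intro a b
  have h2 := heq a 1 b 1
  have e1 := hone a
  have e2 := hone b
  have e3 : Ψ 1 b = Ψ b 1 := hsymm 1 b
  linear_combination -h2 + a * e3 + a * e2 - b * e1
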